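/- arXiv:2601.15591 — 5 statements merged into one kernel-verified Lean document; each statement's English description precedes it below -/
import Mathlib

section
/- Let A, B, C be three affinely independent points in a Euclidean space (a triangle). Let D be a point in the open segment joining B and C such that ∠BAD = ∠CAD (so that the segment AD is the internal bisector of the angle at A), and let E be a point in the open segment joining A and C such that ∠ABE = ∠CBE (so that BE is the internal bisector of the angle at B). If ∠CAB > ∠ABC, then dist(A, D) < dist(B, E); that is, the larger angle has the strictly shorter internal bisector. -/
open EuclideanGeometry Real

private lemma keyTrig {x y : ℝ} (hy : 0 < y) (hyx : y < x) (hxy : x + y < π / 2) :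
    Real.sin (2*y) * Real.sin (2*x + y) < Real.sin (2*x) * Real.sin (2*y + x) := by
  have hpi : (0:ℝ) < π := Real.pi_pos
  have hx : 0 < x := hy.trans hyx
  have hx2 : x < π / 2 := by linarith
  have hy2 : y < π / 2 := by linarith
  have hsx : 0 < Real.sin x := Real.sin_pos_of_pos_of_lt_pi hx (by linarith)
  have hsy : 0 < Real.sin y := Real.sin_pos_of_pos_of_lt_pi hy (by linarith)
  have hcx : 0 < Real.cos x := Real.cos_pos_of_mem_Ioo ⟨by linarith, hx2⟩
  have hcy : 0 < Real.cos y := Real.cos_pos_of_mem_Ioo ⟨by linarith, hy2⟩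
  have hsyx : Real.sin y < Real.sin x :=
    Real.strictMonoOn_sin ⟨by linarith, by linarith⟩ ⟨by linarith, by linarith⟩ hyx
  have hcxy : Real.cos x < Real.cos y :=
    Real.cos_lt_cos_of_nonneg_of_le_pi hy.le (by linarith) hyx
  have hsycx : Real.sin y < Real.cos x := by
    rw [← Real.sin_pi_div_two_sub]
    exact Real.strictMonoOn_sin ⟨by linarith, by linarith⟩ ⟨by linarith, by linarith⟩
      (by linarith)
  have hsxcy : Real.sin x < Real.cos y := by
    rw [← Real.sin_pi_div_two_sub]
    exact Real.strictMonoOn_sin ⟨by linarith, by linarith⟩ ⟨by linarith, by linarith⟩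
      (by linarith)
  set sx := Real.sin x
  set cx := Real.cos x
  set sy := Real.sin y
  set cy := Real.cos y
  have hpx : sx^2 + cx^2 = 1 := Real.sin_sq_add_cos_sq x
  have hpy : sy^2 + cy^2 = 1 := Real.sin_sq_add_cos_sq y
  have h1 : sx * sy < cx * cy := by
    have := mul_lt_mul'' hsxcy hsycx hsx.le hsy.le
    nlinarith [this]
  have h2 : 2 * (sx * sy) < 1 := by
    nlinarith [sq_nonneg (sx - cx), mul_lt_mul_of_pos_left hsycx hsx]
  have hF : 0 < cx^2 + cy^2 + cx*cy + 2*sx^2*sy^2 - 2*sx*sy*cx*cy - 1 := by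
    nlinarith [mul_pos (sub_pos.2 h1) (by linarith : (0:ℝ) < 1 - 2*(sx*sy)),
      mul_pos hsy (sub_pos.2 hsyx), mul_pos hcx hcx]
  rw [Real.sin_add, Real.sin_add, Real.sin_two_mul, Real.sin_two_mul, Real.cos_two_mul,
    Real.cos_two_mul]
  have hid : 2*sx*cx * (2*sy*cy*cx + (2*cy^2 - 1)*sx)
      - 2*sy*cy * (2*sx*cx*cy + (2*cx^2 - 1)*sy)
      = 2*(cy - cx) * (cx^2 + cy^2 + cx*cy + 2*sx^2*sy^2 - 2*sx*sy*cx*cy - 1) := by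
    linear_combination (2*cx - 4*sy^2*cy) * hpx + (4*sx^2*cx - 2*cy) * hpy
  nlinarith [mul_pos (sub_pos.2 hcxy) hF, hid]

private lemma lawSin {V : Type*} [NormedAddCommGroup V] [InnerProductSpace ℝ V]
    {P : Type*} [MetricSpace P] [NormedAddTorsor V P] (p1 p2 p3 : P) :
    Real.sin (∠ p1 p2 p3) * (dist p1 p2 * dist p3 p2)
      = Real.sin (∠ p1 p3 p2) * (dist p1 p3 * dist p2 p3) := by
  have h1 := InnerProductGeometry.sin_angle_mul_norm_mul_norm (p1 -ᵥ p2 : V) (p3 -ᵥ p2)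
  have h2 := InnerProductGeometry.sin_angle_mul_norm_mul_norm (p1 -ᵥ p3 : V) (p2 -ᵥ p3)
  have key : inner ℝ (p1 -ᵥ p2 : V) (p1 -ᵥ p2 : V) * inner ℝ (p3 -ᵥ p2 : V) (p3 -ᵥ p2 : V)
        - inner ℝ (p1 -ᵥ p2 : V) (p3 -ᵥ p2 : V) * inner ℝ (p1 -ᵥ p2 : V) (p3 -ᵥ p2 : V)
      = inner ℝ (p1 -ᵥ p3 : V) (p1 -ᵥ p3 : V) * inner ℝ (p2 -ᵥ p3 : V) (p2 -ᵥ p3 : V)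
        - inner ℝ (p1 -ᵥ p3 : V) (p2 -ᵥ p3 : V) * (inner ℝ (p1 -ᵥ p3 : V) (p2 -ᵥ p3 : V) : ℝ) := by
    have e1 : (p1 -ᵥ p3 : V) = (p1 -ᵥ p2) - (p3 -ᵥ p2) := (vsub_sub_vsub_cancel_right p1 p3 p2).symm
    have e2 : (p2 -ᵥ p3 : V) = -(p3 -ᵥ p2) := (neg_vsub_eq_vsub_rev p3 p2).symm
    rw [e1, e2]
    simp only [inner_sub_left, inner_sub_right, inner_neg_left, inner_neg_right,
      real_inner_comm (p1 -ᵥ p2 : V) (p3 -ᵥ p2 : V)]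
    ring
  rw [EuclideanGeometry.angle, EuclideanGeometry.angle, dist_eq_norm_vsub V p1 p2,
    dist_eq_norm_vsub V p3 p2, dist_eq_norm_vsub V p1 p3, dist_eq_norm_vsub V p2 p3, h1, h2, key]

set_option maxHeartbeats 1000000 in
/-- The larger angle has the strictly shorter internal bisector. -/
theorem steinerLehmus_strict {V : Type*} [NormedAddCommGroup V] [InnerProductSpace ℝ V]
    {P : Type*} [MetricSpace P] [NormedAddTorsor V P]
    {A B C D E : P}
    (hABC : AffineIndependent ℝ ![A, B, C])
    (hD : Sbtw ℝ B D C)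
    (hAD : ∠ B A D = ∠ C A D)
    (hE : Sbtw ℝ A E C)
    (hBE : ∠ A B E = ∠ C B E)
    (hangle : ∠ C A B > ∠ A B C) :
    dist A D < dist B E := by
  have hnc : ¬Collinear ℝ ({A, B, C} : Set P) := affineIndependent_iff_not_collinear_set.1 hABC
  -- distinctness of the vertices
  have hBA : B ≠ A := by
    have := hABC.injective.ne (show (1 : Fin 3) ≠ 0 by decide); simpa using this
  have hCA : C ≠ A := by
    have := hABC.injective.ne (show (2 : Fin 3) ≠ 0 by decide); simpa using this
  have hCB : C ≠ B := by
    have := hABC.injective.ne (show (2 : Fin 3) ≠ 1 by decide); simpa using this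
  have hAB : A ≠ B := hBA.symm
  have hDB : D ≠ B := hD.ne_left
  have hDC : D ≠ C := hD.ne_right
  have hEA : E ≠ A := hE.ne_left
  have hEC : E ≠ C := hE.ne_right
  have hDA : D ≠ A := by
    rintro rfl
    have h := hD.wbtw.collinear
    rw [Set.insert_comm] at h
    exact hnc h
  have hEB : E ≠ B := by
    rintro rfl
    exact hnc hE.wbtw.collinear
  -- not-collinear permutations for angle positivity
  have hncBAC : ¬Collinear ℝ ({B, A, C} : Set P) := by rwa [Set.insert_comm]
  have hncACB : ¬Collinear ℝ ({A, C, B} : Set P) := by rwa [Set.pair_comm C B]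
  -- positivity of the three angles
  have hapos : 0 < ∠ B A C := angle_pos_of_not_collinear hncBAC
  have hbpos : 0 < ∠ A B C := angle_pos_of_not_collinear hnc
  have hgpos : 0 < ∠ A C B := angle_pos_of_not_collinear hncACB
  -- angle identities
  have hsum : ∠ A B C + ∠ B C A + ∠ C A B = π := angle_add_angle_add_angle_eq_pi C hBA
  have hBDCpi : ∠ B D C = π := hD.angle₁₂₃_eq_pi
  have hAECpi : ∠ A E C = π := hE.angle₁₂₃_eq_pi
  have eABD : ∠ A B D = ∠ A B C := angle_eq_angle_of_angle_eq_pi A hBDCpi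
  have eACD : ∠ A C D = ∠ A C B := angle_eq_angle_of_angle_eq_pi A hD.symm.angle₁₂₃_eq_pi
  have eBAE : ∠ B A E = ∠ B A C := angle_eq_angle_of_angle_eq_pi B hAECpi
  have eBCE : ∠ B C E = ∠ B C A := angle_eq_angle_of_angle_eq_pi B hE.symm.angle₁₂₃_eq_pi
  have qD : ∠ A D B + ∠ A D C = π := angle_add_angle_eq_pi_of_angle_eq_pi A hBDCpi
  have qE : ∠ B E A + ∠ B E C = π := angle_add_angle_eq_pi_of_angle_eq_pi B hAECpi
  have tABD : ∠ A B D + ∠ B D A + ∠ D A B = π := angle_add_angle_add_angle_eq_pi D hBA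
  have tACD : ∠ A C D + ∠ C D A + ∠ D A C = π := angle_add_angle_add_angle_eq_pi D hCA
  have tBAE : ∠ B A E + ∠ A E B + ∠ E B A = π := angle_add_angle_add_angle_eq_pi E hAB
  have tBCE : ∠ B C E + ∠ C E B + ∠ E B C = π := angle_add_angle_add_angle_eq_pi E hCB
  -- commutativity facts
  have c1 : ∠ B D A = ∠ A D B := angle_comm _ _ _
  have c2 : ∠ D A B = ∠ B A D := angle_comm _ _ _
  have c3 : ∠ C D A = ∠ A D C := angle_comm _ _ _
  have c4 : ∠ D A C = ∠ C A D := angle_comm _ _ _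
  have c5 : ∠ A C B = ∠ B C A := angle_comm _ _ _
  have c6 : ∠ C A B = ∠ B A C := angle_comm _ _ _
  have c7 : ∠ A E B = ∠ B E A := angle_comm _ _ _
  have c8 : ∠ E B A = ∠ A B E := angle_comm _ _ _
  have c9 : ∠ C E B = ∠ B E C := angle_comm _ _ _
  have c10 : ∠ E B C = ∠ C B E := angle_comm _ _ _
  -- the bisected halves and the angles at the feet
  have hhalfD : ∠ B A D = ∠ B A C / 2 := by linarith
  have hADB : ∠ A D B = π - ∠ A B C - ∠ B A C / 2 := by linarith
  have hhalfE : ∠ A B E = ∠ A B C / 2 := by linarith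
  have hBEA : ∠ B E A = π - ∠ B A C - ∠ A B C / 2 := by linarith
  -- law of sines in triangles A B D and B A E
  have hdBD : dist B D ≠ 0 := dist_ne_zero.2 hDB.symm
  have hdAE : dist A E ≠ 0 := dist_ne_zero.2 hEA.symm
  have eqD : Real.sin (∠ A B C) * dist A B = Real.sin (∠ A D B) * dist A D := by
    have h := lawSin A B D
    rw [dist_comm D B, eABD] at h
    exact mul_right_cancel₀ hdBD (by rw [mul_assoc, mul_assoc]; exact h)
  have eqE : Real.sin (∠ B A C) * dist B A = Real.sin (∠ B E A) * dist B E := by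
    have h := lawSin B A E
    rw [dist_comm E A, eBAE] at h
    exact mul_right_cancel₀ hdAE (by rw [mul_assoc, mul_assoc]; exact h)
  -- rewrite the sines at the feet
  have sinADB : Real.sin (∠ A D B) = Real.sin (∠ A B C + ∠ B A C / 2) := by
    rw [hADB, show π - ∠ A B C - ∠ B A C / 2 = π - (∠ A B C + ∠ B A C / 2) by ring,
      Real.sin_pi_sub]
  have sinBEA : Real.sin (∠ B E A) = Real.sin (∠ B A C + ∠ A B C / 2) := by
    rw [hBEA, show π - ∠ B A C - ∠ A B C / 2 = π - (∠ B A C + ∠ A B C / 2) by ring,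
      Real.sin_pi_sub]
  -- abbreviations
  set a := ∠ B A C with ha_def
  set b := ∠ A B C with hb_def
  have hba : b < a := by rw [c6] at hangle; exact hangle
  have hab : a + b < π := by linarith
  have hS1 : 0 < Real.sin (b + a / 2) := Real.sin_pos_of_pos_of_lt_pi (by linarith) (by linarith)
  have hS2 : 0 < Real.sin (a + b / 2) := Real.sin_pos_of_pos_of_lt_pi (by linarith) (by linarith)
  have hdAB : 0 < dist A B := dist_pos.2 hAB
  -- the bisector lengths
  have hAD_eq : dist A D * Real.sin (b + a / 2) = Real.sin b * dist A B := by
    rw [eqD, sinADB]; ring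
  have hBE_eq : dist B E * Real.sin (a + b / 2) = Real.sin a * dist A B := by
    rw [dist_comm B A] at eqE
    rw [eqE, sinBEA]; ring
  -- the key trigonometric inequality
  have key : Real.sin b * Real.sin (a + b / 2) < Real.sin a * Real.sin (b + a / 2) := by
    have kt := keyTrig (x := a / 2) (y := b / 2) (by linarith) (by linarith) (by linarith)
    rw [show 2 * (b / 2) = b by ring, show 2 * (a / 2) = a by ring] at kt
    exact kt
  -- conclude
  have e3 : dist A D * (Real.sin (b + a / 2) * Real.sin (a + b / 2))
      = Real.sin b * dist A B * Real.sin (a + b / 2) := by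
    rw [← mul_assoc, hAD_eq]
  have e4 : dist B E * (Real.sin (b + a / 2) * Real.sin (a + b / 2))
      = Real.sin a * dist A B * Real.sin (b + a / 2) := by
    rw [mul_comm (Real.sin (b + a / 2)) (Real.sin (a + b / 2)), ← mul_assoc, hBE_eq]
  have e5 : dist A D * (Real.sin (b + a / 2) * Real.sin (a + b / 2))
      < dist B E * (Real.sin (b + a / 2) * Real.sin (a + b / 2)) := by
    rw [e3, e4]
    have kk := mul_lt_mul_of_pos_right key hdAB
    linarith [kk]
  exact lt_of_mul_lt_mul_right e5 (mul_pos hS1 hS2).le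
end

section
/- (Steiner–Lehmus theorem, classical form.) Let A, B, C be three affinely independent points in a Euclidean space. Let D be a point in the open segment joining B and C with ∠BAD = ∠CAD, and let E be a point in the open segment joining A and C with ∠ABE = ∠CBE. If dist(A, D) = dist(B, E), then ∠CAB = ∠ABC. -/
open EuclideanGeometry RealInnerProductSpace

private lemma bisector_sq {V : Type*} [NormedAddCommGroup V] [InnerProductSpace ℝ V]
    {P : Type*} [MetricSpace P] [NormedAddTorsor V P] {A B C D : P}
    (hnc : ¬ Collinear ℝ ({A, B, C} : Set P))
    (hD : Sbtw ℝ B D C)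
    (hAD : ∠ B A D = ∠ C A D) :
    dist A D ^ 2 * (dist A B + dist A C) ^ 2
      = dist A B * dist A C * ((dist A B + dist A C) ^ 2 - dist B C ^ 2) := by
  set u : V := B -ᵥ A with hu_def
  set v : V := C -ᵥ A with hv_def
  have hBA : B ≠ A := by
    rintro rfl
    exact hnc (by simpa [Set.insert_comm] using collinear_pair ℝ B C)
  have hCA : C ≠ A := by
    rintro rfl
    exact hnc (by simpa [Set.insert_comm, Set.pair_comm] using collinear_pair ℝ C B)
  have hu : u ≠ 0 := vsub_ne_zero.2 hBA
  have hv : v ≠ 0 := vsub_ne_zero.2 hCA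
  have hun : ‖u‖ ≠ 0 := norm_ne_zero_iff.2 hu
  have hvn : ‖v‖ ≠ 0 := norm_ne_zero_iff.2 hv
  have hstrict : ⟪u, v⟫ < ‖u‖ * ‖v‖ := by
    rw [inner_lt_norm_mul_iff_real]
    intro h
    apply hnc
    rw [collinear_iff_of_mem (Set.mem_insert A _)]
    refine ⟨u, fun p hp => ?_⟩
    simp only [Set.mem_insert_iff, Set.mem_singleton_iff] at hp
    rcases hp with rfl | rfl | rfl
    · exact ⟨0, by simp⟩
    · exact ⟨1, by simp [hu_def]⟩
    · refine ⟨‖v‖ / ‖u‖, ?_⟩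
      have hvu : (‖v‖ / ‖u‖) • u = v := by
        rw [div_eq_inv_mul, mul_smul, h, inv_smul_smul₀ hun]
      rw [hvu, hv_def, vsub_vadd]
  obtain ⟨t, ht, hDt⟩ := hD.mem_image_Ioo
  have hDA : D ≠ A := by
    intro h
    have hcol := hD.wbtw.collinear
    rw [h] at hcol
    exact hnc (by rwa [Set.insert_comm] at hcol)
  set w : V := D -ᵥ A with hw_def
  have hw : w ≠ 0 := vsub_ne_zero.2 hDA
  have hwn : ‖w‖ ≠ 0 := norm_ne_zero_iff.2 hw
  have hw_eq : w = u + t • (v - u) := by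
    rw [hw_def, ← hDt, AffineMap.lineMap_apply, vadd_vsub_assoc,
      vsub_sub_vsub_cancel_right C B A]
    module
  have hcomm : ⟪v, u⟫ = ⟪u, v⟫ := real_inner_comm u v
  -- equal cosines
  have hcos : ⟪u, w⟫ / (‖u‖ * ‖w‖) = ⟪v, w⟫ / (‖v‖ * ‖w‖) := by
    have h1 : ∠ B A D = InnerProductGeometry.angle u w := rfl
    have h2 : ∠ C A D = InnerProductGeometry.angle v w := rfl
    have := congrArg Real.cos hAD
    rwa [h1, h2, InnerProductGeometry.cos_angle, InnerProductGeometry.cos_angle] at this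
  rw [div_eq_div_iff (by positivity) (by positivity)] at hcos
  have hkey : ⟪u, w⟫ * ‖v‖ = ⟪v, w⟫ * ‖u‖ :=
    mul_right_cancel₀ hwn (by linear_combination hcos)
  have e1 : ⟪u, w⟫ = (1 - t) * ‖u‖ ^ 2 + t * ⟪u, v⟫ := by
    rw [hw_eq]
    simp only [inner_add_right, inner_sub_right, inner_add_left, inner_sub_left,
      real_inner_smul_right, real_inner_smul_left]
    simp only [real_inner_self_eq_norm_sq, hcomm]
    ring
  have e2 : ⟪v, w⟫ = (1 - t) * ⟪u, v⟫ + t * ‖v‖ ^ 2 := by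
    rw [hw_eq]
    simp only [inner_add_right, inner_sub_right, inner_add_left, inner_sub_left,
      real_inner_smul_right, real_inner_smul_left]
    simp only [real_inner_self_eq_norm_sq, hcomm]
    ring
  rw [e1, e2] at hkey
  have h0 : (‖u‖ * ‖v‖ - ⟪u, v⟫) * ((1 - t) * ‖u‖ - t * ‖v‖) = 0 := by
    linear_combination hkey
  have hne : ‖u‖ * ‖v‖ - ⟪u, v⟫ ≠ 0 := sub_ne_zero.2 hstrict.ne'
  have ht' : (1 - t) * ‖u‖ - t * ‖v‖ = 0 := (mul_eq_zero.mp h0).resolve_left hne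
  have hsum : ‖v‖ + ‖u‖ ≠ 0 := by positivity
  have htval : t = ‖u‖ / (‖v‖ + ‖u‖) := by
    field_simp
    linarith [ht']
  have e3 : ‖w‖ ^ 2 = (1 - t) ^ 2 * ‖u‖ ^ 2 + 2 * t * (1 - t) * ⟪u, v⟫ + t ^ 2 * ‖v‖ ^ 2 := by
    rw [← real_inner_self_eq_norm_sq, hw_eq]
    simp only [inner_add_right, inner_sub_right, inner_add_left, inner_sub_left,
      real_inner_smul_right, real_inner_smul_left]
    simp only [real_inner_self_eq_norm_sq, hcomm]
    ring
  have dAB : dist A B = ‖u‖ := by rw [dist_comm, dist_eq_norm_vsub V]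
  have dAC : dist A C = ‖v‖ := by rw [dist_comm, dist_eq_norm_vsub V]
  have dAD : dist A D = ‖w‖ := by rw [dist_comm, dist_eq_norm_vsub V]
  have e4 : dist B C ^ 2 = ‖u‖ ^ 2 + ‖v‖ ^ 2 - 2 * ⟪u, v⟫ := by
    have hCB : C -ᵥ B = v - u := (vsub_sub_vsub_cancel_right C B A).symm
    rw [dist_comm, dist_eq_norm_vsub V, hCB, norm_sub_sq_real, hcomm]
    ring
  rw [dAB, dAC, dAD, e3, e4, htval]
  field_simp
  ring

/-- Steiner–Lehmus theorem, classical form: equal internal bisectors imply equal angles. -/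
theorem steinerLehmus_angles {V : Type*} [NormedAddCommGroup V] [InnerProductSpace ℝ V]
    {P : Type*} [MetricSpace P] [NormedAddTorsor V P]
    {A B C D E : P}
    (hABC : AffineIndependent ℝ ![A, B, C])
    (hD : Sbtw ℝ B D C)
    (hAD : ∠ B A D = ∠ C A D)
    (hE : Sbtw ℝ A E C)
    (hBE : ∠ A B E = ∠ C B E)
    (hlen : dist A D = dist B E) :
    ∠ C A B = ∠ A B C := by
  have hnc : ¬ Collinear ℝ ({A, B, C} : Set P) :=
    affineIndependent_iff_not_collinear_set.mp hABC
  have hnc2 : ¬ Collinear ℝ ({B, A, C} : Set P) := by rwa [Set.insert_comm]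
  have h1 := bisector_sq hnc hD hAD
  have h2 := bisector_sq hnc2 hE hBE
  have hAB : A ≠ B := by
    rintro rfl
    exact hnc (by simpa using collinear_pair ℝ A C)
  have hAC : A ≠ C := by
    rintro rfl
    exact hnc (by simpa [Set.insert_comm, Set.pair_comm] using collinear_pair ℝ A B)
  have hBC : B ≠ C := by
    rintro rfl
    exact hnc (by simpa [Set.insert_comm] using collinear_pair ℝ A B)
  set a : ℝ := dist B C with ha
  set b : ℝ := dist A C with hb
  set c : ℝ := dist A B with hc
  have hBA : dist B A = c := by rw [hc, dist_comm]
  rw [hBA] at h2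
  have ha0 : 0 < a := dist_pos.2 hBC
  have hb0 : 0 < b := dist_pos.2 hAC
  have hc0 : 0 < c := dist_pos.2 hAB
  have key : (b - a) * (c * (a + b + c) * (c * (a + c) * (b + c) + a * b * (a + b + 2 * c))) = 0 := by
    linear_combination (b + c) ^ 2 * h2 - (a + c) ^ 2 * h1 +
      ((a + c) ^ 2 * (c + b) ^ 2 * (dist A D + dist B E)) * hlen
  have hG : 0 < c * (a + b + c) * (c * (a + c) * (b + c) + a * b * (a + b + 2 * c)) := by
    positivity
  have hba : b = a := by
    have := (mul_eq_zero.mp key).resolve_right hG.ne'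
    linarith
  have hdist : dist C A = dist C B := by
    rw [dist_comm C A, dist_comm C B, ← hb, ← ha, hba]
  rw [angle_eq_angle_of_dist_eq hdist, angle_comm]
end

section
/- (Trigonometric form of the Steiner–Lehmus theorem.) Let α and β be real numbers with 0 < β < α and 2α + 2β < π. Then sin(2β) / sin(α + 2β) < sin(2α) / sin(2α + β). (These two quotients are, up to the common factor dist(A,B), the lengths of the internal bisectors from the vertices with half-angles α and β respectively; hence the larger angle has the smaller bisector.) -/
open Real

/-- Trigonometric form of the Steiner–Lehmus theorem: the larger base angle has
the smaller bisector. -/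
theorem steinerLehmus_trig {α β : ℝ} (hβ : 0 < β) (hβα : β < α)
    (hsum : 2 * α + 2 * β < π) :
    Real.sin (2 * β) / Real.sin (α + 2 * β) < Real.sin (2 * α) / Real.sin (2 * α + β) := by
  have hα : 0 < α := hβ.trans hβα
  have hπ : 0 < π := by linarith
  have hd1 : 0 < Real.sin (α + 2 * β) :=
    Real.sin_pos_of_pos_of_lt_pi (by linarith) (by linarith)
  have hd2 : 0 < Real.sin (2 * α + β) :=
    Real.sin_pos_of_pos_of_lt_pi (by linarith) (by linarith)
  rw [div_lt_div_iff₀ hd1 hd2]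
  set u : ℝ := (α - β) / 2 with hu_def
  set v : ℝ := (α + β) / 2 with hv_def
  have hu : 0 < u := by rw [hu_def]; linarith
  have huv : u < v := by rw [hu_def, hv_def]; linarith
  have hv4 : v < π / 4 := by rw [hv_def]; linarith
  -- key identity
  have hkey : Real.sin (2 * α) * Real.sin (α + 2 * β) -
      Real.sin (2 * β) * Real.sin (2 * α + β) =
      2 * Real.sin u * Real.cos (2 * u) * Real.sin v +
      2 * Real.sin u * Real.sin (3 * v) * Real.cos (2 * v) := by
    rw [show 2 * α + β = 3 * v + u by rw [hu_def, hv_def]; ring,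
        show α + 2 * β = 3 * v - u by rw [hu_def, hv_def]; ring,
        show 2 * α = 2 * u + 2 * v by rw [hu_def, hv_def]; ring,
        show 2 * β = 2 * v - 2 * u by rw [hu_def, hv_def]; ring]
    simp only [Real.sin_add, Real.cos_add, Real.sin_sub, Real.cos_sub,
      Real.sin_two_mul, Real.cos_two_mul, Real.sin_three_mul, Real.cos_three_mul]
    linear_combination
      ((-16) * Real.sin u * Real.sin v + 48 * Real.sin u * Real.sin v * Real.cos v ^ 2 +
        (-32) * Real.sin u * Real.sin v * Real.cos v ^ 4 + 16 * Real.sin u * Real.sin v ^ 3 +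
        (-32) * Real.sin u * Real.sin v ^ 3 * Real.cos v ^ 2) * (Real.sin_sq_add_cos_sq u) +
      (8 * Real.sin u * Real.sin v + (-16) * Real.sin u * Real.sin v * Real.cos v ^ 2 +
        (-16) * Real.sin u ^ 3 * Real.sin v +
        32 * Real.sin u ^ 3 * Real.sin v * Real.cos v ^ 2) * (Real.sin_sq_add_cos_sq v)
  have hsu : 0 < Real.sin u :=
    Real.sin_pos_of_pos_of_lt_pi hu (by linarith)
  have hsv : 0 < Real.sin v :=
    Real.sin_pos_of_pos_of_lt_pi (by linarith) (by linarith)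
  have hs3v : 0 < Real.sin (3 * v) :=
    Real.sin_pos_of_pos_of_lt_pi (by linarith) (by linarith)
  have hc2u : 0 < Real.cos (2 * u) :=
    Real.cos_pos_of_mem_Ioo ⟨by linarith, by linarith [Real.pi_pos]⟩
  have hc2v : 0 < Real.cos (2 * v) :=
    Real.cos_pos_of_mem_Ioo ⟨by linarith, by linarith⟩
  nlinarith [hkey, mul_pos (mul_pos hsu hc2u) hsv, mul_pos (mul_pos hsu hs3v) hc2v]
end

section
/- Let α and β be real numbers with 0 < β < α and 2α + 2β < π. Then sin(α + β) / sin(α + 2β) < sin(2α) / sin(2α + β). (This encodes the inequality ℓ′ > AD from the proof: the length AD = c · sin(α+β)/sin(α+2β) of the constructed sub-segment of the bisector from B is strictly less than the full bisector length ℓ′ = c · sin(2α)/sin(2α+β).) -/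
open Real

/-- The constructed sub-segment `AD` is strictly shorter than the full bisector `ℓ′`. -/
theorem subsegment_lt_bisector {α β : ℝ} (hβ : 0 < β) (hβα : β < α)
    (hsum : 2 * α + 2 * β < π) :
    Real.sin (α + β) / Real.sin (α + 2 * β) < Real.sin (2 * α) / Real.sin (2 * α + β) := by
  have hα : 0 < α := hβ.trans hβα
  have h1 : 0 < Real.sin (α + 2 * β) := Real.sin_pos_of_pos_of_lt_pi (by linarith) (by linarith)
  have h2 : 0 < Real.sin (2 * α + β) := Real.sin_pos_of_pos_of_lt_pi (by linarith) (by linarith)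
  rw [div_lt_div_iff₀ h1 h2]
  have e1 : 2 * (Real.sin (α + β) * Real.sin (2 * α + β))
      = Real.cos α - Real.cos (3 * α + 2 * β) := by
    rw [Real.cos_sub_cos]
    have : (α - (3 * α + 2 * β)) / 2 = -(α + β) := by ring
    rw [this, Real.sin_neg]
    ring_nf
  have e2 : 2 * (Real.sin (2 * α) * Real.sin (α + 2 * β))
      = Real.cos (α - 2 * β) - Real.cos (3 * α + 2 * β) := by
    rw [Real.cos_sub_cos]
    have : (α - 2 * β - (3 * α + 2 * β)) / 2 = -(α + 2 * β) := by ring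
    rw [this, Real.sin_neg]
    ring_nf
  have key : Real.cos α < Real.cos (α - 2 * β) := by
    rcases le_or_gt 0 (α - 2 * β) with h | h
    · exact Real.cos_lt_cos_of_nonneg_of_le_pi h (by linarith) (by linarith)
    · rw [show α - 2 * β = -(2 * β - α) by ring, Real.cos_neg]
      exact Real.cos_lt_cos_of_nonneg_of_le_pi (by linarith) (by linarith) (by linarith)
  linarith
end

section
/- Let A, B, C be three affinely independent points in a Euclidean space. Let D be a point in the open segment joining B and C with ∠BAD = ∠CAD, and let E be a point in the open segment joining A and C with ∠ABE = ∠CBE. Then ∠CAB > ∠ABC if and only if dist(A, D) < dist(B, E); that is, the internal bisector from A is strictly shorter than the internal bisector from B precisely when the angle at A is strictly larger than the angle at B. -/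
open EuclideanGeometry

private lemma sin_mul_sin' (x y : ℝ) :
    Real.sin x * Real.sin y = (Real.cos (x - y) - Real.cos (x + y)) / 2 := by
  rw [Real.cos_sub, Real.cos_add]; ring

private lemma sin_five_mul' (x : ℝ) :
    Real.sin (5 * x) = 16 * Real.sin x ^ 5 - 20 * Real.sin x ^ 3 + 5 * Real.sin x := by
  have h : (5 : ℝ) * x = 2 * x + 3 * x := by ring
  rw [h, Real.sin_add, Real.sin_two_mul, Real.cos_two_mul, Real.sin_three_mul,
    Real.cos_three_mul]
  have hc := Real.sin_sq_add_cos_sq x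
  linear_combination (8 * Real.sin x * Real.cos x ^ 2 - 16 * Real.sin x ^ 3
    + 8 * Real.sin x) * hc

private lemma steiner_id (p q : ℝ) :
    Real.sin (2 * (p + q)) * Real.sin ((p + q) + 2 * (p - q)) -
      Real.sin (2 * (p - q)) * Real.sin ((p - q) + 2 * (p + q)) =
    Real.sin (3 * q) * Real.sin p + Real.sin (5 * p) * Real.sin q := by
  rw [sin_mul_sin', sin_mul_sin', sin_mul_sin' (3 * q), sin_mul_sin' (5 * p),
    show 2 * (p + q) - ((p + q) + 2 * (p - q)) = 3 * q - p by ring,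
    show 2 * (p + q) + ((p + q) + 2 * (p - q)) = 5 * p + q by ring,
    show 2 * (p - q) - ((p - q) + 2 * (p + q)) = -(3 * q + p) by ring,
    show 2 * (p - q) + ((p - q) + 2 * (p + q)) = 5 * p - q by ring,
    Real.cos_neg]
  ring

/-- The key trigonometric inequality behind Steiner–Lehmus. -/
private lemma steiner_key {a b : ℝ} (hb : 0 < b) (hba : b < a) (hab : a + b < Real.pi / 2) :
    Real.sin (2 * b) * Real.sin (b + 2 * a) < Real.sin (2 * a) * Real.sin (a + 2 * b) := by
  have hpi := Real.pi_pos
  set p := (a + b) / 2 with hp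
  set q := (a - b) / 2 with hq
  have ha' : a = p + q := by rw [hp, hq]; ring
  have hb' : b = p - q := by rw [hp, hq]; ring
  have hq0 : 0 < q := by rw [hq]; linarith
  have hqp : q < p := by rw [hp, hq]; linarith
  have hp4 : p < Real.pi / 4 := by rw [hp]; linarith
  have hp0 : 0 < p := hq0.trans hqp
  rw [← sub_pos, ha', hb', steiner_id]
  have hsinp : 0 < Real.sin p := Real.sin_pos_of_pos_of_lt_pi hp0 (by linarith)
  have hsinq : 0 < Real.sin q := Real.sin_pos_of_pos_of_lt_pi hq0 (by linarith)
  have hs3q : 0 < Real.sin (3 * q) :=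
    Real.sin_pos_of_pos_of_lt_pi (by linarith) (by linarith)
  by_cases h5 : 0 ≤ Real.sin (5 * p)
  · nlinarith [mul_pos hs3q hsinp, mul_nonneg h5 hsinq.le]
  · push_neg at h5
    have hmono : Real.sin q < Real.sin p := by
      apply Real.strictMonoOn_sin ⟨by linarith, by linarith⟩ ⟨by linarith, by linarith⟩ hqp
    have hsp4 : Real.sin p < Real.sin (Real.pi / 4) := by
      apply Real.strictMonoOn_sin ⟨by linarith, by linarith⟩ ⟨by linarith, by linarith⟩ hp4
    rw [Real.sin_pi_div_four] at hsp4
    have h2 : Real.sqrt 2 ^ 2 = 2 := Real.sq_sqrt (by norm_num)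
    have hsp2 : Real.sin p ^ 2 < 1 / 2 := by nlinarith
    have hq2 : Real.sin q ^ 2 < Real.sin p ^ 2 := by nlinarith
    rw [Real.sin_three_mul, sin_five_mul']
    have h8 : 0 < 8 - 4 * Real.sin q ^ 2 - 20 * Real.sin p ^ 2 + 16 * Real.sin p ^ 4 := by
      nlinarith [sq_nonneg (Real.sin p ^ 2)]
    nlinarith [mul_pos (mul_pos hsinp hsinq) h8]

/-- A version of the law of sines. -/
private lemma law_sin {V : Type*} [NormedAddCommGroup V] [InnerProductSpace ℝ V]
    {P : Type*} [MetricSpace P] [NormedAddTorsor V P] (p q r : P) :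
    Real.sin (∠ q p r) * (dist p q * dist p r) =
      Real.sin (∠ p q r) * (dist q p * dist q r) := by
  have h1 := InnerProductGeometry.sin_angle_mul_norm_mul_norm (q -ᵥ p) (r -ᵥ p)
  have h2 := InnerProductGeometry.sin_angle_mul_norm_mul_norm (-(q -ᵥ p)) ((r -ᵥ p) - (q -ᵥ p))
  have ea : ∠ q p r = InnerProductGeometry.angle (q -ᵥ p) (r -ᵥ p) := rfl
  have eb : ∠ p q r = InnerProductGeometry.angle (-(q -ᵥ p)) ((r -ᵥ p) - (q -ᵥ p)) := by
    rw [EuclideanGeometry.angle, neg_vsub_eq_vsub_rev, vsub_sub_vsub_cancel_right]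
  rw [ea, eb, dist_eq_norm_vsub' V p q, dist_eq_norm_vsub' V p r,
    show dist q p = ‖-(q -ᵥ p)‖ by rw [norm_neg, dist_eq_norm_vsub V q p],
    show dist q r = ‖(r -ᵥ p) - (q -ᵥ p)‖ by
      rw [vsub_sub_vsub_cancel_right, dist_eq_norm_vsub' V q r],
    show ‖q -ᵥ p‖ = ‖-(q -ᵥ p)‖ from (norm_neg _).symm] at *
  rw [h1, h2]
  congr 1
  simp only [inner_neg_neg, inner_neg_left, inner_neg_right, inner_sub_left, inner_sub_right]
  rw [real_inner_comm (q -ᵥ p) (r -ᵥ p)]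
  ring

private lemma bisector_aux {V : Type*} [NormedAddCommGroup V] [InnerProductSpace ℝ V]
    {P : Type*} [MetricSpace P] [NormedAddTorsor V P] {A B C D : P}
    (h : ¬Collinear ℝ ({A, B, C} : Set P)) (hD : Sbtw ℝ B D C)
    (hAD : ∠ B A D = ∠ C A D) :
    ∠ B A D + ∠ B A D = ∠ B A C ∧
      dist A D * Real.sin (∠ B A D + ∠ A B C) = dist A B * Real.sin (∠ A B C) := by
  have hBA : B ≠ A := by
    rintro rfl; exact h (by simpa using collinear_pair ℝ B C)
  have hCA : C ≠ A := by
    rintro rfl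
    refine h ?_
    have : ({C, B, C} : Set P) = {C, B} := by ext x; simp; tauto
    rw [this]; exact collinear_pair ℝ C B
  have hDA : D ≠ A := by
    intro hda
    apply h
    have hc : Collinear ℝ ({B, D, C} : Set P) := hD.wbtw.collinear
    rw [hda] at hc
    rwa [Set.insert_comm] at hc
  have hBDC : ∠ B D C = Real.pi := hD.angle₁₂₃_eq_pi
  have hCDB : ∠ C D B = Real.pi := hD.symm.angle₁₂₃_eq_pi
  have hpi : ∠ A D B + ∠ A D C = Real.pi := angle_add_angle_eq_pi_of_angle_eq_pi A hBDC
  have hABD : ∠ A B D = ∠ A B C := angle_eq_angle_of_angle_eq_pi A hBDC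
  have hACD : ∠ A C D = ∠ A C B := angle_eq_angle_of_angle_eq_pi A hCDB
  have T1 : ∠ A B D + ∠ B D A + ∠ D A B = Real.pi :=
    angle_add_angle_add_angle_eq_pi D hBA
  have T2 : ∠ A C D + ∠ C D A + ∠ D A C = Real.pi :=
    angle_add_angle_add_angle_eq_pi D hCA
  have T3 : ∠ A B C + ∠ B C A + ∠ C A B = Real.pi :=
    angle_add_angle_add_angle_eq_pi C hBA
  have c1 : ∠ B D A = ∠ A D B := angle_comm _ _ _
  have c2 : ∠ C D A = ∠ A D C := angle_comm _ _ _
  have c3 : ∠ D A B = ∠ B A D := angle_comm _ _ _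
  have c4 : ∠ D A C = ∠ C A D := angle_comm _ _ _
  have c5 : ∠ B C A = ∠ A C B := angle_comm _ _ _
  have c6 : ∠ C A B = ∠ B A C := angle_comm _ _ _
  constructor
  · linarith
  · have hls := _root_.law_sin B D A
    rw [dist_comm D B] at hls
    have hbd : dist B D ≠ 0 := dist_ne_zero.2 (Ne.symm hD.ne_left)
    have h' : Real.sin (∠ D B A) * dist B A = Real.sin (∠ B D A) * dist D A :=
      mul_left_cancel₀ hbd (by linear_combination hls)
    have c7 : ∠ D B A = ∠ A B D := angle_comm _ _ _
    have harg : ∠ B D A = Real.pi - (∠ B A D + ∠ A B C) := by linarith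
    rw [harg, Real.sin_pi_sub, c7, hABD, dist_comm B A, dist_comm D A] at h'
    linarith

/-- The internal bisector from `A` is strictly shorter than the internal bisector
from `B` precisely when the angle at `A` is strictly larger than the angle at `B`. -/
theorem steinerLehmus_iff {V : Type*} [NormedAddCommGroup V] [InnerProductSpace ℝ V]
    {P : Type*} [MetricSpace P] [NormedAddTorsor V P]
    {A B C D E : P}
    (hABC : AffineIndependent ℝ ![A, B, C])
    (hD : Sbtw ℝ B D C)
    (hAD : ∠ B A D = ∠ C A D)
    (hE : Sbtw ℝ A E C)
    (hBE : ∠ A B E = ∠ C B E) :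
    ∠ C A B > ∠ A B C ↔ dist A D < dist B E := by
  have hpi := Real.pi_pos
  rw [affineIndependent_iff_not_collinear_set] at hABC
  have hncol1 : ¬Collinear ℝ ({A, B, C} : Set P) := hABC
  have hncol2 : ¬Collinear ℝ ({B, A, C} : Set P) := by
    rw [Set.insert_comm]; exact hABC
  have hncol3 : ¬Collinear ℝ ({B, C, A} : Set P) := by
    intro hc; apply hABC
    have : ({B, C, A} : Set P) = {A, B, C} := by ext x; simp; tauto
    rwa [this] at hc
  have hncol4 : ¬Collinear ℝ ({C, A, B} : Set P) := by
    intro hc; apply hABC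
    have : ({C, A, B} : Set P) = {A, B, C} := by ext x; simp; tauto
    rwa [this] at hc
  obtain ⟨hA2, hEq1⟩ := bisector_aux hncol1 hD hAD
  obtain ⟨hB2, hEq2⟩ := bisector_aux hncol2 hE hBE
  have hBA : B ≠ A := by
    rintro rfl; exact hABC (by simpa using collinear_pair ℝ B C)
  have hCA : C ≠ A := by
    rintro rfl
    apply hABC
    have : ({C, B, C} : Set P) = {C, B} := by ext x; simp; tauto
    rw [this]; exact collinear_pair ℝ C B
  have T3 : ∠ A B C + ∠ B C A + ∠ C A B = Real.pi :=
    angle_add_angle_add_angle_eq_pi C hBA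
  have hγ : 0 < ∠ B C A := angle_pos_of_not_collinear hncol3
  have hα : 0 < ∠ C A B := angle_pos_of_not_collinear hncol4
  have hβ : 0 < ∠ A B C := angle_pos_of_not_collinear hncol1
  have c6 : ∠ C A B = ∠ B A C := angle_comm _ _ _
  set s := ∠ B A D with hs
  set t := ∠ A B E with ht
  have hBAC : ∠ B A C = 2 * s := by linarith
  have hABC' : ∠ A B C = 2 * t := by linarith
  have hs0 : 0 < s := by linarith
  have ht0 : 0 < t := by linarith
  have hst : s + t < Real.pi / 2 := by linarith
  rw [hABC'] at hEq1
  rw [hBAC, dist_comm B A] at hEq2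
  have hc0 : 0 < dist A B := dist_pos.2 (Ne.symm hBA)
  -- general comparison step
  have main : ∀ x y : ℝ, ∀ dx dy : ℝ, 0 < y → y < x → x + y < Real.pi / 2 →
      dx * Real.sin (x + 2 * y) = dist A B * Real.sin (2 * y) →
      dy * Real.sin (y + 2 * x) = dist A B * Real.sin (2 * x) → dx < dy := by
    intro x y dx dy hy hyx hxy hdx hdy
    have hkey := steiner_key hy hyx hxy
    have hs1 : 0 < Real.sin (x + 2 * y) :=
      Real.sin_pos_of_pos_of_lt_pi (by linarith) (by linarith)
    have hs2 : 0 < Real.sin (y + 2 * x) :=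
      Real.sin_pos_of_pos_of_lt_pi (by linarith) (by linarith)
    have h1 : dx * (Real.sin (x + 2 * y) * Real.sin (y + 2 * x)) <
        dy * (Real.sin (x + 2 * y) * Real.sin (y + 2 * x)) := by
      have e1 : dx * (Real.sin (x + 2 * y) * Real.sin (y + 2 * x)) =
          (dist A B) * (Real.sin (2 * y) * Real.sin (y + 2 * x)) := by
        linear_combination Real.sin (y + 2 * x) * hdx
      have e2 : dy * (Real.sin (x + 2 * y) * Real.sin (y + 2 * x)) =
          (dist A B) * (Real.sin (2 * x) * Real.sin (x + 2 * y)) := by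
        linear_combination Real.sin (x + 2 * y) * hdy
      rw [e1, e2]
      exact mul_lt_mul_of_pos_left hkey hc0
    exact lt_of_mul_lt_mul_right h1 (mul_pos hs1 hs2).le
  rw [c6, hBAC, hABC']
  constructor
  · intro hgt
    exact main s t (dist A D) (dist B E) ht0 (by linarith) hst hEq1 hEq2
  · intro hlt
    rcases lt_trichotomy t s with h | h | h
    · linarith
    · exfalso
      rw [← h] at hEq1 hEq2 hst
      have hs3 : 0 < Real.sin (t + 2 * t) :=
        Real.sin_pos_of_pos_of_lt_pi (by linarith) (by linarith)
      have : dist A D = dist B E := by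
        have := hEq1.trans hEq2.symm
        exact mul_right_cancel₀ (ne_of_gt hs3) this
      linarith
    · exfalso
      have := main t s (dist B E) (dist A D) hs0 h (by linarith) hEq2 hEq1
      linarith
end
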